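/- arXiv:2304.11198 — 2 statements merged into one kernel-verified Lean document; each statement's English description precedes it below -/
import Mathlib

section
/- Consider the closed-loop system described in the context. If t* > 0 and θ_i(t) ∈ (−1, 1) for all t ∈ [0, t*) and all i ∈ {1,…,n}, then each of the functions t ↦ υ_i(t), t ↦ z_i(t), t ↦ ξ_i(t), t ↦ f_i(ξ̄_i(t)), t ↦ g_i(ξ̄_i(t)), t ↦ ż_i(t), t ↦ θ̇_i(t), and t ↦ υ̇_i(t), for i ∈ {1,…,n}, is bounded on [0, t*). -/
/-!
Since `|θ_i| < 1` and `q_i ≤ ψ_i ≤ p_i`, the errors satisfy `|z_i| ≤ p_i`, and the arctan saturates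
`|υ_i| ≤ |v̄_i|`; hence the states `ξ_i = z_i + υ_{i-1}`, the drifts `f_i(ξ̄_i)` (linear growth),
the gains `g_i` and, through the dynamics, the velocities `ξ̇_i` are bounded. Derivatives are then
bounded stage by stage along the backstepping chain: `ż_i = ξ̇_i - υ̇_{i-1}`,
`θ̇_i = (ż_i ψ_i - z_i ψ̇_i) / ψ_i²`, and differentiating
`υ_i = -(2 v̄_i / π) arctan (a_i tan (π θ_i / 2))` produces the factor
`a (1 + T²) / (1 + a² T²)` with `T = tan (π θ_i / 2)`, which stays below `|a| + |a|⁻¹` although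
`T` itself is unbounded as `θ_i → ±1`.
-/

open Real Set

/-- The truncated state vector `ξ̄_i(t) = (ξ_1(t), …, ξ_i(t))` as an element of
`EuclideanSpace ℝ (Fin i)` (states are indexed `1, …, n`). -/
noncomputable def xibar (ξ : ℕ → ℝ → ℝ) (i : ℕ) (t : ℝ) : EuclideanSpace ℝ (Fin i) :=
  WithLp.toLp 2 (fun j : Fin i => ξ (j.1 + 1) t)

open Filter

def BoundedOn (u : ℝ → ℝ) (S : Set ℝ) : Prop :=
  ∃ M, ∀ t ∈ S, |u t| ≤ M

namespace BoundedOn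

variable {u w : ℝ → ℝ} {S : Set ℝ}

theorem eventually (h : BoundedOn u S) : ∀ᶠ M in atTop, ∀ t ∈ S, |u t| ≤ M := by
  obtain ⟨M, hM⟩ := h
  exact eventually_atTop.2 ⟨M, fun _ hM' t ht => (hM t ht).trans hM'⟩

theorem mono {T : Set ℝ} (h : BoundedOn u T) (hST : S ⊆ T) : BoundedOn u S := by
  obtain ⟨M, hM⟩ := h
  exact ⟨M, fun t ht => hM t (hST ht)⟩

theorem congr (h : BoundedOn u S) (huw : ∀ t ∈ S, u t = w t) : BoundedOn w S := by
  obtain ⟨M, hM⟩ := h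
  exact ⟨M, fun t ht => huw t ht ▸ hM t ht⟩

theorem of_abs_le (hw : BoundedOn w S) (h : ∀ t ∈ S, |u t| ≤ |w t|) : BoundedOn u S := by
  obtain ⟨M, hM⟩ := hw
  exact ⟨M, fun t ht => (h t ht).trans (hM t ht)⟩

theorem of_le_le {a b : ℝ} (h : ∀ t ∈ S, a ≤ u t ∧ u t ≤ b) : BoundedOn u S :=
  ⟨max |a| |b|, fun t ht => abs_le_max_abs_abs (h t ht).1 (h t ht).2⟩

theorem add (hu : BoundedOn u S) (hw : BoundedOn w S) : BoundedOn (fun t => u t + w t) S := by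
  obtain ⟨M, hM⟩ := hu
  obtain ⟨N, hN⟩ := hw
  exact ⟨M + N, fun t ht => (abs_add_le _ _).trans (add_le_add (hM t ht) (hN t ht))⟩

theorem sub (hu : BoundedOn u S) (hw : BoundedOn w S) : BoundedOn (fun t => u t - w t) S := by
  obtain ⟨M, hM⟩ := hu
  obtain ⟨N, hN⟩ := hw
  exact ⟨M + N, fun t ht => (abs_sub _ _).trans (add_le_add (hM t ht) (hN t ht))⟩

theorem mul (hu : BoundedOn u S) (hw : BoundedOn w S) : BoundedOn (fun t => u t * w t) S := by
  obtain ⟨M, hM⟩ := hu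
  obtain ⟨N, hN⟩ := hw
  refine ⟨M * N, fun t ht => ?_⟩
  rw [abs_mul]
  exact mul_le_mul (hM t ht) (hN t ht) (abs_nonneg _) ((abs_nonneg _).trans (hM t ht))

theorem div_of_le_abs {ε : ℝ} (hu : BoundedOn u S) (hε : 0 < ε) (hw : ∀ t ∈ S, ε ≤ |w t|) :
    BoundedOn (fun t => u t / w t) S := by
  obtain ⟨M, hM⟩ := hu
  refine ⟨M / ε, fun t ht => ?_⟩
  rw [abs_div]
  exact div_le_div₀ ((abs_nonneg _).trans (hM t ht)) (hM t ht) hε (hw t ht)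

theorem of_div_mem_Ioo (hw : BoundedOn w S) (hpos : ∀ t ∈ S, 0 < w t)
    (h : ∀ t ∈ S, u t / w t ∈ Ioo (-1) 1) : BoundedOn u S := by
  refine hw.of_abs_le fun t ht => ?_
  have hquot : |u t / w t| ≤ 1 := abs_le.2 ⟨(h t ht).1.le, (h t ht).2.le⟩
  rwa [abs_div, div_le_one (abs_pos.2 (hpos t ht).ne')] at hquot

end BoundedOn

def HasBoundedDerivOn (u : ℝ → ℝ) (S : Set ℝ) : Prop :=
  (∀ t ∈ S, DifferentiableAt ℝ u t) ∧ BoundedOn (deriv u) S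

namespace HasBoundedDerivOn

variable {u w : ℝ → ℝ} {S : Set ℝ}

theorem of_hasDerivAt {u' : ℝ → ℝ} (h : ∀ t ∈ S, HasDerivAt u (u' t) t) (hb : BoundedOn u' S) :
    HasBoundedDerivOn u S :=
  ⟨fun t ht => (h t ht).differentiableAt, hb.congr fun t ht => (h t ht).deriv.symm⟩

theorem mono {T : Set ℝ} (h : HasBoundedDerivOn u T) (hST : S ⊆ T) : HasBoundedDerivOn u S :=
  ⟨fun t ht => h.1 t (hST ht), h.2.mono hST⟩

theorem sub (hu : HasBoundedDerivOn u S) (hw : HasBoundedDerivOn w S) :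
    HasBoundedDerivOn (fun t => u t - w t) S :=
  of_hasDerivAt (fun t ht => (hu.1 t ht).hasDerivAt.sub (hw.1 t ht).hasDerivAt) (hu.2.sub hw.2)

theorem div {ε : ℝ} (hu : HasBoundedDerivOn u S) (hw : HasBoundedDerivOn w S)
    (hub : BoundedOn u S) (hwb : BoundedOn w S) (hε : 0 < ε) (hwε : ∀ t ∈ S, ε ≤ |w t|) :
    HasBoundedDerivOn (fun t => u t / w t) S := by
  have hw0 : ∀ t ∈ S, w t ≠ 0 := fun t ht => abs_pos.1 (hε.trans_le (hwε t ht))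
  refine of_hasDerivAt (fun t ht => (hu.1 t ht).hasDerivAt.div (hw.1 t ht).hasDerivAt (hw0 t ht))
    (((hu.2.mul hwb).sub (hub.mul hw.2)).div_of_le_abs (pow_pos hε 2) fun t ht => ?_)
  rw [abs_pow]
  exact pow_le_pow_left₀ hε.le (hwε t ht) 2

end HasBoundedDerivOn

theorem EuclideanSpace.norm_le_sum_abs {ι : Type*} [Fintype ι] (x : EuclideanSpace ℝ ι) :
    ‖x‖ ≤ ∑ i, |x i| := by
  conv_lhs => rw [← (EuclideanSpace.basisFun ι ℝ).sum_repr x]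
  refine (norm_sum_le _ _).trans_eq ?_
  simp [norm_smul]

theorem boundedOn_norm_xibar {ξ : ℕ → ℝ → ℝ} {i : ℕ} {S : Set ℝ}
    (h : ∀ j ∈ Finset.Icc 1 i, BoundedOn (ξ j) S) : BoundedOn (fun t => ‖xibar ξ i t‖) S := by
  choose! M hM using h
  refine ⟨∑ j : Fin i, M (j + 1), fun t ht => ?_⟩
  rw [abs_norm]
  refine (EuclideanSpace.norm_le_sum_abs _).trans (Finset.sum_le_sum fun j _ => hM _ ?_ t ht)
  exact Finset.mem_Icc.2 ⟨by omega, j.2⟩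

theorem BoundedOn.comp_of_abs_le_mul_norm {E : Type*} [SeminormedAddCommGroup E] {F : E → ℝ}
    {X : ℝ → E} {S : Set ℝ} {k : ℝ} (hF : ∀ x, |F x| ≤ k * ‖x‖) (hX : BoundedOn (‖X ·‖) S) :
    BoundedOn (fun t => F (X t)) S := by
  obtain ⟨M, hM⟩ := hX
  refine ⟨|k| * M, fun t ht => (hF (X t)).trans ?_⟩
  have hXM : ‖X t‖ ≤ M := abs_norm (X t) ▸ hM t ht
  exact (mul_le_mul_of_nonneg_right (le_abs_self k) (norm_nonneg _)).trans
    (mul_le_mul_of_nonneg_left hXM (abs_nonneg k))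

theorem HasBoundedDerivOn.of_dynamics {x x' w d : ℝ → ℝ} {a : ℝ} {S : Set ℝ}
    (hx : ∀ t ∈ S, HasDerivAt x (x' t) t) {F G : ℝ → ℝ} (hF : BoundedOn F S)
    (hG : BoundedOn G S) (hd : ∀ t ∈ S, |d t| ≤ a) (hw : BoundedOn w S)
    (hdyn : ∀ t ∈ S, x' t = F t + G t * w t + d t) : HasBoundedDerivOn x S :=
  .of_hasDerivAt hx (((hF.add (hG.mul hw)).add ⟨a, hd⟩).congr fun t ht => (hdyn t ht).symm)

noncomputable def perfFun (p q μ t : ℝ) : ℝ := (p - q) * exp (-μ * t) + q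

section perfFun

variable {p q μ : ℝ}

theorem perfFun_mem_Icc (hpq : q ≤ p) (hμ : 0 ≤ μ) {t : ℝ} (ht : 0 ≤ t) :
    perfFun p q μ t ∈ Icc q p := by
  have hexp : exp (-μ * t) ≤ 1 := exp_le_one_iff.2 (by nlinarith)
  have hpq' : 0 ≤ p - q := sub_nonneg.2 hpq
  constructor <;> unfold perfFun <;> nlinarith [exp_pos (-μ * t)]

theorem hasDerivAt_perfFun (p q μ t : ℝ) :
    HasDerivAt (perfFun p q μ) (-(μ * (p - q) * exp (-μ * t))) t := by
  have h := (((hasDerivAt_id t).const_mul (-μ)).exp.const_mul (p - q)).add_const q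
  exact h.congr_deriv (by simp only [id, mul_one]; ring)

theorem hasBoundedDerivOn_perfFun (hpq : q ≤ p) (hμ : 0 ≤ μ) :
    HasBoundedDerivOn (perfFun p q μ) (Ici 0) := by
  refine .of_hasDerivAt (fun t _ => hasDerivAt_perfFun p q μ t)
    (.of_le_le (a := -(μ * (p - q))) (b := 0) fun t ht => ?_)
  have hexp : exp (-μ * t) ≤ 1 := exp_le_one_iff.2 (by nlinarith [mem_Ici.1 ht])
  have hμpq : 0 ≤ μ * (p - q) := mul_nonneg hμ (sub_nonneg.2 hpq)
  constructor <;> nlinarith [exp_pos (-μ * t)]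

end perfFun

noncomputable def arctanTanControl (v c θ : ℝ) : ℝ :=
  -(2 * v / π) * arctan (π / (2 * c) * tan (π / 2 * θ))

theorem abs_arctanTanControl_le (v c θ : ℝ) : |arctanTanControl v c θ| ≤ |v| := by
  have harctan : |arctan (π / (2 * c) * tan (π / 2 * θ))| ≤ π / 2 :=
    abs_le.2 ⟨(neg_pi_div_two_lt_arctan _).le, (arctan_lt_pi_div_two _).le⟩
  rw [arctanTanControl, abs_mul, abs_neg, abs_div, abs_mul, abs_two, abs_of_pos pi_pos]
  calc 2 * |v| / π * |arctan (π / (2 * c) * tan (π / 2 * θ))|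
      ≤ 2 * |v| / π * (π / 2) := by gcongr
    _ = |v| := by field_simp

theorem abs_mul_one_add_sq_div_le (a T : ℝ) :
    |a * (1 + T ^ 2) / (1 + (a * T) ^ 2)| ≤ |a| + |a|⁻¹ := by
  rcases eq_or_ne a 0 with rfl | ha
  · simp
  have hb : 0 < |a| := abs_pos.2 ha
  rw [abs_div, abs_mul, abs_of_pos (by positivity : (0:ℝ) < 1 + T ^ 2),
    abs_of_pos (by positivity : (0:ℝ) < 1 + (a * T) ^ 2), div_le_iff₀ (by positivity),
    mul_pow, ← sq_abs a]
  have key : (|a| + |a|⁻¹) * (1 + |a| ^ 2 * T ^ 2) - |a| * (1 + T ^ 2) =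
      |a| ^ 3 * T ^ 2 + |a|⁻¹ := by
    field_simp
    ring
  nlinarith [inv_pos.2 hb, mul_nonneg (pow_pos hb 3).le (sq_nonneg T)]

theorem hasDerivAt_arctanTanControl (v c : ℝ) {θ : ℝ} (hθ : θ ∈ Ioo (-1) 1) :
    HasDerivAt (arctanTanControl v c) (-v * (π / (2 * c) * (1 + tan (π / 2 * θ) ^ 2) /
      (1 + (π / (2 * c) * tan (π / 2 * θ)) ^ 2))) θ := by
  have hcos : cos (π / 2 * θ) ≠ 0 :=
    (cos_pos_of_mem_Ioo ⟨by nlinarith [pi_pos, hθ.1], by nlinarith [pi_pos, hθ.2]⟩).ne'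
  have h := ((((hasDerivAt_tan hcos).comp θ ((hasDerivAt_id θ).const_mul (π / 2))).const_mul
    (π / (2 * c))).arctan).const_mul (-(2 * v / π))
  refine h.congr_deriv ?_
  rw [Function.comp_apply, ← inv_one_add_tan_sq hcos]
  field_simp

theorem HasBoundedDerivOn.arctanTanControl_comp {θ : ℝ → ℝ} {S : Set ℝ} (v c : ℝ)
    (hθ : HasBoundedDerivOn θ S) (hmem : ∀ t ∈ S, θ t ∈ Ioo (-1) 1) :
    HasBoundedDerivOn (fun t => arctanTanControl v c (θ t)) S := by
  refine .of_hasDerivAt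
    (fun t ht => (hasDerivAt_arctanTanControl v c (hmem t ht)).comp t (hθ.1 t ht).hasDerivAt)
    (BoundedOn.mul ⟨|v| * (|π / (2 * c)| + |π / (2 * c)|⁻¹), fun t _ => ?_⟩ hθ.2)
  rw [abs_mul, abs_neg]
  exact mul_le_mul_of_nonneg_left (abs_mul_one_add_sq_div_le _ _) (abs_nonneg v)

section Backstepping

variable {S : Set ℝ} {p q μ : ℝ} {u x w z θ : ℝ → ℝ}

theorem BoundedOn.of_div_perfFun_mem_Ioo (hS : S ⊆ Ici 0) (hq : 0 < q) (hpq : q ≤ p)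
    (hμ : 0 ≤ μ) (h : ∀ t ∈ S, u t / perfFun p q μ t ∈ Ioo (-1) 1) : BoundedOn u S :=
  BoundedOn.of_div_mem_Ioo (.of_le_le fun _ ht => perfFun_mem_Icc hpq hμ (hS ht))
    (fun _ ht => hq.trans_le (perfFun_mem_Icc hpq hμ (hS ht)).1) h

theorem hasBoundedDerivOn_backstepping_stage (v c : ℝ) (hS : S ⊆ Ici 0) (hq : 0 < q)
    (hpq : q ≤ p) (hμ : 0 ≤ μ) (hz : ∀ t, z t = x t - w t)
    (hθ : ∀ t, θ t = z t / perfFun p q μ t) (hθmem : ∀ t ∈ S, θ t ∈ Ioo (-1) 1)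
    (hx : HasBoundedDerivOn x S) (hw : HasBoundedDerivOn w S) :
    HasBoundedDerivOn z S ∧ HasBoundedDerivOn θ S ∧
      HasBoundedDerivOn (fun t => arctanTanControl v c (θ t)) S := by
  have hperf : ∀ t ∈ S, perfFun p q μ t ∈ Icc q p := fun t ht => perfFun_mem_Icc hpq hμ (hS ht)
  have hzD : HasBoundedDerivOn z S := funext hz ▸ hx.sub hw
  have hzB : BoundedOn z S := .of_div_perfFun_mem_Ioo hS hq hpq hμ fun t ht => hθ t ▸ hθmem t ht
  have hθD : HasBoundedDerivOn θ S := funext hθ ▸ hzD.div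
    ((hasBoundedDerivOn_perfFun hpq hμ).mono hS) hzB (.of_le_le hperf) hq
    fun t ht => (hperf t ht).1.trans (le_abs_self _)
  exact ⟨hzD, hθD, hθD.arctanTanControl_comp v c hθmem⟩

end Backstepping

theorem closed_loop_signals_bounded_general
    (n : ℕ)
    (k glo ghi dbar p q μ vbar c : ℕ → ℝ)
    (f g : (i : ℕ) → EuclideanSpace ℝ (Fin i) → ℝ)
    (d : ℕ → ℝ → ℝ)
    (yd yd' : ℝ → ℝ) (r₀ : ℝ)
    (ξ ξ' υ z θ ψ : ℕ → ℝ → ℝ)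
    -- assumptions on the unknown system maps
    (hf : ∀ i ∈ Finset.Icc 1 n, ∀ x : EuclideanSpace ℝ (Fin i), |f i x| ≤ k i * ‖x‖)
    (hg : ∀ i ∈ Finset.Icc 1 n, ∀ x : EuclideanSpace ℝ (Fin i),
      glo i ≤ g i x ∧ g i x ≤ ghi i)
    (hd : ∀ i ∈ Finset.Icc 1 n, ∀ t : ℝ, 0 ≤ t → |d i t| ≤ dbar i)
    -- the desired output is continuously differentiable and bounded
    (hyd : ∀ t : ℝ, 0 ≤ t → HasDerivAt yd (yd' t) t)
    (hydbd : ∀ t : ℝ, 0 ≤ t → |yd t| ≤ vbar 0)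
    (hyd'bd : ∀ t : ℝ, 0 ≤ t → |yd' t| ≤ r₀)
    -- performance functions
    (hq : ∀ i ∈ Finset.Icc 1 n, 0 < q i)
    (hpq : ∀ i ∈ Finset.Icc 1 n, q i ≤ p i)
    (hμ : ∀ i ∈ Finset.Icc 1 n, 0 < μ i)
    (hψ : ∀ i ∈ Finset.Icc 1 n, ∀ t : ℝ, ψ i t = (p i - q i) * Real.exp (-(μ i) * t) + q i)
    -- controller (recursive definition, `υ 0 = y_d`)
    (hυ0 : ∀ t : ℝ, υ 0 t = yd t)
    (hz : ∀ i ∈ Finset.Icc 1 n, ∀ t : ℝ, z i t = ξ i t - υ (i - 1) t)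
    (hθ : ∀ i ∈ Finset.Icc 1 n, ∀ t : ℝ, θ i t = z i t / ψ i t)
    (hυ : ∀ i ∈ Finset.Icc 1 n, ∀ t : ℝ,
      υ i t = -(2 * vbar i / π) * Real.arctan (π / (2 * c i) * Real.tan (π / 2 * θ i t)))
    -- state dynamics: `ξ` is continuously differentiable and satisfies the ODE
    (hξ : ∀ i ∈ Finset.Icc 1 n, ∀ t : ℝ, 0 ≤ t → HasDerivAt (ξ i) (ξ' i t) t)
    (hdyn : ∀ i ∈ Finset.Icc 1 (n - 1), ∀ t : ℝ, 0 ≤ t →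
      ξ' i t = f i (xibar ξ i t) + g i (xibar ξ i t) * ξ (i + 1) t + d i t)
    (hdynn : ∀ t : ℝ, 0 ≤ t →
      ξ' n t = f n (xibar ξ n t) + g n (xibar ξ n t) * υ n t + d n t)
    -- hypothesis: `θ_i(t) ∈ (−1, 1)` on `[0, t*)`
    (tstar : ℝ)
    (hθmem : ∀ t ∈ Ico (0 : ℝ) tstar, ∀ i ∈ Finset.Icc 1 n, θ i t ∈ Ioo (-1 : ℝ) 1) :
    ∀ i ∈ Finset.Icc 1 n, ∃ M : ℝ, ∀ t ∈ Ico (0 : ℝ) tstar,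
      |υ i t| ≤ M ∧ |z i t| ≤ M ∧ |ξ i t| ≤ M ∧
      |f i (xibar ξ i t)| ≤ M ∧ |g i (xibar ξ i t)| ≤ M ∧
      |deriv (z i) t| ≤ M ∧ |deriv (θ i) t| ≤ M ∧ |deriv (υ i) t| ≤ M := by
  set S := Ico (0 : ℝ) tstar
  have hS : S ⊆ Ici 0 := fun t ht => ht.1
  have hθ' : ∀ i ∈ Finset.Icc 1 n, ∀ t, θ i t = z i t / perfFun (p i) (q i) (μ i) t :=
    fun i hi t => by rw [hθ i hi t, hψ i hi t]; rfl
  have hυ' : ∀ i ∈ Finset.Icc 1 n, υ i = fun t => arctanTanControl (vbar i) (c i) (θ i t) :=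
    fun i hi => funext (hυ i hi)
  have hυB : ∀ i ≤ n, BoundedOn (υ i) S := by
    rintro (_ | i) hi
    · exact ⟨vbar 0, fun t ht => hυ0 t ▸ hydbd t ht.1⟩
    · rw [hυ' (i + 1) (by grind)]
      exact ⟨_, fun t _ => abs_arctanTanControl_le _ _ _⟩
  have hzB : ∀ i ∈ Finset.Icc 1 n, BoundedOn (z i) S := fun i hi =>
    .of_div_perfFun_mem_Ioo hS (hq i hi) (hpq i hi) (hμ i hi).le fun t ht =>
      hθ' i hi t ▸ hθmem t ht i hi
  have hξB : ∀ i ∈ Finset.Icc 1 n, BoundedOn (ξ i) S := fun i hi =>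
    ((hzB i hi).add (hυB (i - 1) (by grind))).congr fun t _ => by rw [hz i hi t]; ring
  have hfB : ∀ i ∈ Finset.Icc 1 n, BoundedOn (fun t => f i (xibar ξ i t)) S := fun i hi =>
    .comp_of_abs_le_mul_norm (hf i hi) (boundedOn_norm_xibar fun j hj => hξB j (by grind))
  have hgB : ∀ i ∈ Finset.Icc 1 n, BoundedOn (fun t => g i (xibar ξ i t)) S := fun i hi =>
    .of_le_le fun t _ => hg i hi _
  have hξD : ∀ i ∈ Finset.Icc 1 n, HasBoundedDerivOn (ξ i) S := by
    intro i hi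
    have hξ' : ∀ t ∈ S, HasDerivAt (ξ i) (ξ' i t) t := fun t ht => hξ i hi t ht.1
    have hdB : ∀ t ∈ S, |d i t| ≤ dbar i := fun t ht => hd i hi t ht.1
    rcases (Finset.mem_Icc.1 hi).2.lt_or_eq with hlt | rfl
    · exact .of_dynamics hξ' (hfB i hi) (hgB i hi) hdB (hξB (i + 1) (by grind))
        fun t ht => hdyn i (by grind) t ht.1
    · exact .of_dynamics hξ' (hfB i hi) (hgB i hi) hdB (hυB i le_rfl) fun t ht => hdynn t ht.1
  have hstage : ∀ i ∈ Finset.Icc 1 n, HasBoundedDerivOn (υ (i - 1)) S →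
      HasBoundedDerivOn (z i) S ∧ HasBoundedDerivOn (θ i) S ∧ HasBoundedDerivOn (υ i) S :=
    fun i hi hυD => hυ' i hi ▸ hasBoundedDerivOn_backstepping_stage (vbar i) (c i) hS
      (hq i hi) (hpq i hi) (hμ i hi).le (hz i hi) (hθ' i hi) (fun t ht => hθmem t ht i hi)
      (hξD i hi) hυD
  have hυD : ∀ i ≤ n, HasBoundedDerivOn (υ i) S := by
    intro i
    induction i with
    | zero =>
      exact fun _ => funext hυ0 ▸
        .of_hasDerivAt (fun t ht => hyd t ht.1) ⟨r₀, fun t ht => hyd'bd t ht.1⟩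
    | succ i ih => exact fun hi => (hstage (i + 1) (by grind) (ih (by omega))).2.2
  intro i hi
  obtain ⟨hzD, hθD, -⟩ := hstage i hi (hυD (i - 1) (by grind))
  obtain ⟨M, h1, h2, h3, h4, h5, h6, h7, h8⟩ := ((hυB i (by grind)).eventually.and <|
    (hzB i hi).eventually.and <| (hξB i hi).eventually.and <| (hfB i hi).eventually.and <|
    (hgB i hi).eventually.and <| hzD.2.eventually.and <| hθD.2.eventually.and
    (hυD i (by grind)).2.eventually).exists
  exact ⟨M, fun t ht => ⟨h1 t ht, h2 t ht, h3 t ht, h4 t ht, h5 t ht, h6 t ht, h7 t ht, h8 t ht⟩⟩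

/-- For the closed-loop system (pure-feedback system of order `n ≥ 1`
with Lipschitz-bounded unknown drifts `f i`, bounded control coefficients `g i`,
bounded disturbances `d i`, performance functions `ψ i`, and the recursively
defined backstepping errors `z i`, normalized errors `θ i` and arctan-tan
controller inputs `υ i`, where `υ 0 = y_d`): if `t* > 0` and `θ_i(t) ∈ (−1, 1)`
for all `t ∈ [0, t*)` and all `i ∈ {1,…,n}`, then each of the functions
`υ_i, z_i, ξ_i, f_i(ξ̄_i), g_i(ξ̄_i), ż_i, θ̇_i, υ̇_i` is bounded on `[0, t*)`. -/
theorem closed_loop_signals_bounded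
    (n : ℕ) (hn : 1 ≤ n)
    (k glo ghi dbar p q μ vbar c : ℕ → ℝ)
    (f g : (i : ℕ) → EuclideanSpace ℝ (Fin i) → ℝ)
    (d : ℕ → ℝ → ℝ)
    (yd yd' : ℝ → ℝ) (r₀ : ℝ)
    (ξ ξ' υ z θ ψ : ℕ → ℝ → ℝ)
    -- assumptions on the unknown system maps
    (hk : ∀ i ∈ Finset.Icc 1 n, 0 ≤ k i)
    (hf : ∀ i ∈ Finset.Icc 1 n, ∀ x : EuclideanSpace ℝ (Fin i), |f i x| ≤ k i * ‖x‖)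
    (hglo : ∀ i ∈ Finset.Icc 1 n, 0 ≤ glo i)
    (hgord : ∀ i ∈ Finset.Icc 1 n, glo i ≤ ghi i)
    (hg : ∀ i ∈ Finset.Icc 1 n, ∀ x : EuclideanSpace ℝ (Fin i),
      glo i ≤ g i x ∧ g i x ≤ ghi i)
    (hdbar : ∀ i ∈ Finset.Icc 1 n, 0 ≤ dbar i)
    (hd : ∀ i ∈ Finset.Icc 1 n, ∀ t : ℝ, 0 ≤ t → |d i t| ≤ dbar i)
    -- the desired output is continuously differentiable and bounded
    (hvbar0 : 0 < vbar 0) (hr₀ : 0 < r₀)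
    (hyd : ∀ t : ℝ, 0 ≤ t → HasDerivAt yd (yd' t) t)
    (hyd'cont : ContinuousOn yd' (Ici 0))
    (hydbd : ∀ t : ℝ, 0 ≤ t → |yd t| ≤ vbar 0)
    (hyd'bd : ∀ t : ℝ, 0 ≤ t → |yd' t| ≤ r₀)
    -- performance functions
    (hq : ∀ i ∈ Finset.Icc 1 n, 0 < q i)
    (hpq : ∀ i ∈ Finset.Icc 1 n, q i ≤ p i)
    (hμ : ∀ i ∈ Finset.Icc 1 n, 0 < μ i)
    (hψ : ∀ i ∈ Finset.Icc 1 n, ∀ t : ℝ, ψ i t = (p i - q i) * Real.exp (-(μ i) * t) + q i)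
    -- controller (recursive definition, `υ 0 = y_d`)
    (hvbar : ∀ i ∈ Finset.Icc 1 n, 0 < vbar i)
    (hc : ∀ i ∈ Finset.Icc 1 n, 0 < c i)
    (hυ0 : ∀ t : ℝ, υ 0 t = yd t)
    (hz : ∀ i ∈ Finset.Icc 1 n, ∀ t : ℝ, z i t = ξ i t - υ (i - 1) t)
    (hθ : ∀ i ∈ Finset.Icc 1 n, ∀ t : ℝ, θ i t = z i t / ψ i t)
    (hυ : ∀ i ∈ Finset.Icc 1 n, ∀ t : ℝ,
      υ i t = -(2 * vbar i / π) * Real.arctan (π / (2 * c i) * Real.tan (π / 2 * θ i t)))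
    -- state dynamics: `ξ` is continuously differentiable and satisfies the ODE
    (hξ : ∀ i ∈ Finset.Icc 1 n, ∀ t : ℝ, 0 ≤ t → HasDerivAt (ξ i) (ξ' i t) t)
    (hξ'cont : ∀ i ∈ Finset.Icc 1 n, ContinuousOn (ξ' i) (Ici 0))
    (hdyn : ∀ i ∈ Finset.Icc 1 (n - 1), ∀ t : ℝ, 0 ≤ t →
      ξ' i t = f i (xibar ξ i t) + g i (xibar ξ i t) * ξ (i + 1) t + d i t)
    (hdynn : ∀ t : ℝ, 0 ≤ t →
      ξ' n t = f n (xibar ξ n t) + g n (xibar ξ n t) * υ n t + d n t)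
    -- hypothesis: `θ_i(t) ∈ (−1, 1)` on `[0, t*)`
    (tstar : ℝ) (htstar : 0 < tstar)
    (hθmem : ∀ t ∈ Ico (0 : ℝ) tstar, ∀ i ∈ Finset.Icc 1 n, θ i t ∈ Ioo (-1 : ℝ) 1) :
    ∀ i ∈ Finset.Icc 1 n, ∃ M : ℝ, ∀ t ∈ Ico (0 : ℝ) tstar,
      |υ i t| ≤ M ∧ |z i t| ≤ M ∧ |ξ i t| ≤ M ∧
      |f i (xibar ξ i t)| ≤ M ∧ |g i (xibar ξ i t)| ≤ M ∧
      |deriv (z i) t| ≤ M ∧ |deriv (θ i) t| ≤ M ∧ |deriv (υ i) t| ≤ M :=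
  closed_loop_signals_bounded_general n k glo ghi dbar p q μ vbar c f g d yd yd' r₀ ξ ξ' υ z θ ψ hf
    hg hd hyd hydbd hyd'bd hq hpq hμ hψ hυ0 hz hθ hυ hξ hdyn hdynn tstar hθmem
end

section
/- Consider the closed-loop system described in the context. If t* > 0, the feasibility conditions φ_i < (ḡ_i + g̲_i)·v̄_i + μ_i·(q_i − p_i) hold for every i ∈ {1,…,n}, and θ_i(t) ∈ (−1, 1) for all t ∈ [0, t*) and all i ∈ {1,…,n}, then the derivatives of the (virtual) control inputs satisfy |υ̇_i(t)| ≤ r_i for all t ∈ [0, t*) and all i ∈ {1,…,n}. -/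
open Real Set

/-- The vector `δ_i = (p_1 + v̄_0, …, p_i + v̄_{i−1})` in `EuclideanSpace ℝ (Fin i)`. -/
noncomputable def deltaVec (p vbar : ℕ → ℝ) (i : ℕ) : EuclideanSpace ℝ (Fin i) :=
  WithLp.toLp 2 (fun j : Fin i => p (j.1 + 1) + vbar j.1)

theorem EuclideanSpace.norm_le_norm_of_forall_norm_le {𝕜 ι : Type*} [RCLike 𝕜] [Fintype ι]
    {x y : EuclideanSpace 𝕜 ι} (h : ∀ j, ‖x j‖ ≤ ‖y j‖) : ‖x‖ ≤ ‖y‖ := by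
  rw [EuclideanSpace.norm_eq, EuclideanSpace.norm_eq]
  gcongr with j
  exact h j

theorem norm_xibar_le_norm_deltaVec {ξ : ℕ → ℝ → ℝ} {p vbar : ℕ → ℝ} {i : ℕ} {t : ℝ}
    (h : ∀ j ∈ Finset.Icc 1 i, |ξ j t| ≤ p j + vbar (j - 1)) :
    ‖xibar ξ i t‖ ≤ ‖deltaVec p vbar i‖ :=
  EuclideanSpace.norm_le_norm_of_forall_norm_le fun j =>
    (h (j + 1) (Finset.mem_Icc.2 ⟨by omega, j.2⟩)).trans (le_abs_self _)

theorem abs_add_mul_add_le {a g u b K G U D : ℝ} (ha : |a| ≤ K) (hg₀ : 0 ≤ g) (hg : g ≤ G)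
    (hu : |u| ≤ U) (hb : |b| ≤ D) : |a + g * u + b| ≤ K + G * U + D := by
  have hgu : |g * u| ≤ G * U := by
    rw [abs_mul, abs_of_nonneg hg₀]
    exact mul_le_mul hg hu (abs_nonneg u) (hg₀.trans hg)
  calc |a + g * u + b| ≤ |a| + |g * u| + |b| := abs_add_three a (g * u) b
    _ ≤ K + G * U + D := by gcongr

noncomputable def performance (p q μ t : ℝ) : ℝ := (p - q) * exp (-μ * t) + q

section performance

variable {p q μ t : ℝ}

theorem le_performance (hpq : q ≤ p) : q ≤ performance p q μ t := by
  unfold performance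
  nlinarith [exp_pos (-μ * t)]

theorem abs_lt_performance_of_abs_div_lt_one {z : ℝ} (hq : 0 < q) (hpq : q ≤ p)
    (h : |z / performance p q μ t| < 1) : |z| < performance p q μ t := by
  have hψ : 0 < performance p q μ t := hq.trans_le (le_performance hpq)
  rwa [abs_div, abs_of_pos hψ, div_lt_one hψ] at h

theorem performance_le (hpq : q ≤ p) (hμ : 0 ≤ μ) (ht : 0 ≤ t) : performance p q μ t ≤ p := by
  have : exp (-μ * t) ≤ 1 := exp_le_one_iff.2 (by nlinarith)
  unfold performance
  nlinarith

theorem abs_le_of_abs_div_performance_lt_one {z : ℝ} (hq : 0 < q) (hpq : q ≤ p) (hμ : 0 ≤ μ)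
    (ht : 0 ≤ t) (h : |z / performance p q μ t| < 1) : |z| ≤ p :=
  (abs_lt_performance_of_abs_div_lt_one hq hpq h).le.trans (performance_le hpq hμ ht)

theorem mul_exp_le_performance (hq : 0 ≤ q) (hμ : 0 ≤ μ) (ht : 0 ≤ t) :
    p * exp (-μ * t) ≤ performance p q μ t := by
  have : exp (-μ * t) ≤ 1 := exp_le_one_iff.2 (by nlinarith)
  unfold performance
  nlinarith

theorem hasDerivAt_performance :
    HasDerivAt (performance p q μ) (-(μ * (p - q) * exp (-μ * t))) t := by
  have h := (((hasDerivAt_id' t).const_mul (-μ)).exp.const_mul (p - q)).add_const q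
  exact h.congr_deriv (by ring)

theorem abs_deriv_performance_le (hq : 0 ≤ q) (hpq : q ≤ p) (hp : 0 < p) (hμ : 0 ≤ μ)
    (ht : 0 ≤ t) :
    |μ * (p - q) * exp (-μ * t)| ≤ μ * (p - q) / p * performance p q μ t := by
  have hc : 0 ≤ μ * (p - q) := mul_nonneg hμ (sub_nonneg.2 hpq)
  rw [abs_of_nonneg (by positivity), div_mul_eq_mul_div, le_div_iff₀ hp]
  calc μ * (p - q) * exp (-μ * t) * p = μ * (p - q) * (p * exp (-μ * t)) := by ring
    _ ≤ μ * (p - q) * performance p q μ t :=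
      mul_le_mul_of_nonneg_left (mul_exp_le_performance hq hμ ht) hc

end performance

theorem abs_div_deriv_le {z z' ψ ψ' q A B : ℝ} (hq : 0 < q) (hqψ : q ≤ ψ) (hz : |z| ≤ ψ)
    (hz' : |z'| ≤ A) (hψ' : |ψ'| ≤ B * ψ) :
    |(z' * ψ - z * ψ') / ψ ^ 2| ≤ A / q + B := by
  have hψ : 0 < ψ := hq.trans_le hqψ
  have hA : |z'| / ψ ≤ A / q :=
    div_le_div₀ ((abs_nonneg _).trans hz') hz' hq hqψ
  have hB : |z| * |ψ'| / ψ ^ 2 ≤ B := by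
    rw [div_le_iff₀ (by positivity)]
    calc |z| * |ψ'| ≤ ψ * (B * ψ) := mul_le_mul hz hψ' (abs_nonneg _) hψ.le
      _ = B * ψ ^ 2 := by ring
  calc |(z' * ψ - z * ψ') / ψ ^ 2| ≤ |z' * ψ| / ψ ^ 2 + |z * ψ'| / ψ ^ 2 := by
        rw [abs_div, abs_of_pos (by positivity : 0 < ψ ^ 2), ← add_div]
        gcongr
        exact abs_sub _ _
    _ = |z'| / ψ + |z| * |ψ'| / ψ ^ 2 := by
        rw [abs_mul, abs_mul, abs_of_pos hψ]
        field_simp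
    _ ≤ A / q + B := add_le_add hA hB

theorem mul_one_add_sq_div_le_max {a : ℝ} (ha : 0 < a) (T : ℝ) :
    a * (1 + T ^ 2) / (1 + (a * T) ^ 2) ≤ max a a⁻¹ := by
  rcases le_total 1 a with h | h
  · refine le_max_of_le_left ?_
    rw [div_le_iff₀ (by positivity)]
    nlinarith [mul_nonneg (mul_nonneg (mul_nonneg ha.le (sub_nonneg.2 h)) (sq_nonneg T))
      (by linarith : (0 : ℝ) ≤ a + 1)]
  · refine le_max_of_le_right ?_
    rw [div_le_iff₀ (by positivity), ← div_eq_inv_mul, le_div_iff₀ ha]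
    nlinarith [sq_nonneg T, mul_pos ha ha]

noncomputable def controlLaw (v c x : ℝ) : ℝ :=
  -(2 * v / π) * arctan (π / (2 * c) * tan (π / 2 * x))

section controlLaw

variable {v c x : ℝ}

theorem abs_controlLaw_le (hv : 0 ≤ v) : |controlLaw v c x| ≤ v := by
  have harctan : |arctan (π / (2 * c) * tan (π / 2 * x))| ≤ π / 2 :=
    abs_le.2 ⟨(neg_pi_div_two_lt_arctan _).le, (arctan_lt_pi_div_two _).le⟩
  calc |controlLaw v c x| = 2 * v / π * |arctan (π / (2 * c) * tan (π / 2 * x))| := by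
        rw [controlLaw, abs_mul, abs_neg, abs_of_nonneg (by positivity)]
    _ ≤ 2 * v / π * (π / 2) := by gcongr
    _ = v := by field_simp

/-- The slope at `x ∈ (-1, 1)` is `-v a (1 + T²) / (1 + (a T)²)` with `a = π / (2c)` and
`T = tan (π x / 2)`, and `a (1 + T²) / (1 + (a T)²) ≤ max a a⁻¹`. -/
theorem exists_hasDerivAt_controlLaw (hv : 0 ≤ v) (hc : 0 < c) (hx : |x| < 1) :
    ∃ D, HasDerivAt (controlLaw v c) D x ∧ |D| ≤ max (π * v / (2 * c)) (2 * v * c / π) := by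
  set a := π / (2 * c) with ha_def
  set T := tan (π / 2 * x) with hT_def
  have ha : 0 < a := by positivity
  have hcos : cos (π / 2 * x) ≠ 0 := by
    refine (cos_pos_of_mem_Ioo ⟨?_, ?_⟩).ne' <;> nlinarith [abs_lt.1 hx, pi_pos]
  have hD := (((hasDerivAt_arctan _).comp x (((hasDerivAt_tan hcos).comp x
    ((hasDerivAt_id' x).const_mul (π / 2))).const_mul a)).const_mul (-(2 * v / π)))
  refine ⟨_, hD, ?_⟩
  have hsec : 1 / cos (π / 2 * x) ^ 2 = 1 + T ^ 2 := by
    rw [one_div, ← inv_one_add_tan_sq hcos, inv_inv]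
  calc _ = v * (a * (1 + T ^ 2) / (1 + (a * T) ^ 2)) := by
        rw [hsec, Function.comp_apply, ← hT_def, abs_mul, abs_neg, abs_of_nonneg (by positivity),
          abs_of_nonneg (by positivity)]
        field_simp
    _ ≤ v * max a a⁻¹ := mul_le_mul_of_nonneg_left (mul_one_add_sq_div_le_max ha T) hv
    _ = max (π * v / (2 * c)) (2 * v * c / π) := by
        rw [mul_max_of_nonneg _ _ hv, ha_def, inv_div]
        congr 1 <;> ring

end controlLaw

theorem exists_hasDerivAt_controlLaw_div_performance {z : ℝ → ℝ} {z' A v c p q μ t : ℝ}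
    (hz : HasDerivAt z z' t) (hz' : |z'| ≤ A) (hθ : |z t / performance p q μ t| < 1)
    (hv : 0 ≤ v) (hc : 0 < c) (hq : 0 < q) (hpq : q ≤ p) (hμ : 0 ≤ μ) (ht : 0 ≤ t) :
    ∃ D, HasDerivAt (fun s => controlLaw v c (z s / performance p q μ s)) D t ∧
      |D| ≤ (A / q + μ * (p - q) / p) * max (π * v / (2 * c)) (2 * v * c / π) := by
  have hψ : 0 < performance p q μ t := hq.trans_le (le_performance hpq)
  have hzψ := (abs_lt_performance_of_abs_div_lt_one hq hpq hθ).le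
  have hψ' : |-(μ * (p - q) * exp (-μ * t))| ≤ μ * (p - q) / p * performance p q μ t := by
    rw [abs_neg]
    exact abs_deriv_performance_le hq.le hpq (hq.trans_le hpq) hμ ht
  have hθ' := hz.div hasDerivAt_performance hψ.ne'
  have hθ'_le := abs_div_deriv_le hq (le_performance hpq) hzψ hz' hψ'
  obtain ⟨D, hD, hD_le⟩ := exists_hasDerivAt_controlLaw hv hc hθ
  have hcomp : HasDerivAt (controlLaw v c ∘ (z / performance p q μ)) _ t := hD.comp t hθ'
  refine ⟨_, hcomp, ?_⟩
  rw [abs_mul, mul_comm]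
  exact mul_le_mul hθ'_le hD_le (abs_nonneg D) ((abs_nonneg _).trans hθ'_le)

theorem exists_hasDerivAt_controlLaw_recursion {n : ℕ} {υ ξ z : ℕ → ℝ → ℝ}
    {ξ' φ r vbar c p q μ : ℕ → ℝ} {t : ℝ} (ht : 0 ≤ t)
    (h₀ : ∃ v, HasDerivAt (υ 0) v t ∧ |v| ≤ r 0)
    (hξ : ∀ i ∈ Finset.Icc 1 n, HasDerivAt (ξ i) (ξ' i) t)
    (hξ' : ∀ i ∈ Finset.Icc 1 n, |ξ' i| + r (i - 1) ≤ φ i)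
    (hz : ∀ i ∈ Finset.Icc 1 n, z i = fun s => ξ i s - υ (i - 1) s)
    (hυ : ∀ i ∈ Finset.Icc 1 n,
      υ i = fun s => controlLaw (vbar i) (c i) (z i s / performance (p i) (q i) (μ i) s))
    (hθ : ∀ i ∈ Finset.Icc 1 n, |z i t / performance (p i) (q i) (μ i) t| < 1)
    (hr : ∀ i ∈ Finset.Icc 1 n, r i = (φ i / q i + μ i * (p i - q i) / p i) *
      max (π * vbar i / (2 * c i)) (2 * vbar i * c i / π))
    (hvbar : ∀ i ∈ Finset.Icc 1 n, 0 ≤ vbar i) (hc : ∀ i ∈ Finset.Icc 1 n, 0 < c i)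
    (hq : ∀ i ∈ Finset.Icc 1 n, 0 < q i) (hpq : ∀ i ∈ Finset.Icc 1 n, q i ≤ p i)
    (hμ : ∀ i ∈ Finset.Icc 1 n, 0 ≤ μ i) :
    ∀ i ≤ n, ∃ v, HasDerivAt (υ i) v t ∧ |v| ≤ r i := by
  intro i
  induction i with
  | zero => exact fun _ => h₀
  | succ i ih =>
    intro hi
    have hi' : i + 1 ∈ Finset.Icc 1 n := Finset.mem_Icc.2 ⟨by omega, hi⟩
    obtain ⟨w, hw, hw_le⟩ := ih (by omega)
    have hz' : HasDerivAt (z (i + 1)) (ξ' (i + 1) - w) t := by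
      rw [hz _ hi']
      exact (hξ _ hi').sub hw
    have hz'_le : |ξ' (i + 1) - w| ≤ φ (i + 1) := by
      have := hξ' _ hi'
      rw [Nat.add_sub_cancel] at this
      linarith [abs_sub (ξ' (i + 1)) w]
    rw [hυ _ hi', hr _ hi']
    exact exists_hasDerivAt_controlLaw_div_performance hz' hz'_le (hθ _ hi') (hvbar _ hi')
      (hc _ hi') (hq _ hi') (hpq _ hi') (hμ _ hi') ht

theorem virtual_input_derivative_bounds_general
    (n : ℕ)
    (k glo ghi dbar p q μ vbar c : ℕ → ℝ)
    (f g : (i : ℕ) → EuclideanSpace ℝ (Fin i) → ℝ)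
    (d : ℕ → ℝ → ℝ)
    (yd yd' : ℝ → ℝ) (r₀ : ℝ)
    (ξ ξ' υ z θ ψ : ℕ → ℝ → ℝ)
    (φ r : ℕ → ℝ)
    -- assumptions on the unknown system maps
    (hk : ∀ i ∈ Finset.Icc 1 n, 0 ≤ k i)
    (hf : ∀ i ∈ Finset.Icc 1 n, ∀ x : EuclideanSpace ℝ (Fin i), |f i x| ≤ k i * ‖x‖)
    (hglo : ∀ i ∈ Finset.Icc 1 n, 0 ≤ glo i)
    (hg : ∀ i ∈ Finset.Icc 1 n, ∀ x : EuclideanSpace ℝ (Fin i),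
      glo i ≤ g i x ∧ g i x ≤ ghi i)
    (hd : ∀ i ∈ Finset.Icc 1 n, ∀ t : ℝ, 0 ≤ t → |d i t| ≤ dbar i)
    -- the desired output is continuously differentiable and bounded
    (hyd : ∀ t : ℝ, 0 ≤ t → HasDerivAt yd (yd' t) t)
    (hydbd : ∀ t : ℝ, 0 ≤ t → |yd t| ≤ vbar 0)
    (hyd'bd : ∀ t : ℝ, 0 ≤ t → |yd' t| ≤ r₀)
    -- performance functions
    (hq : ∀ i ∈ Finset.Icc 1 n, 0 < q i)
    (hpq : ∀ i ∈ Finset.Icc 1 n, q i ≤ p i)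
    (hμ : ∀ i ∈ Finset.Icc 1 n, 0 < μ i)
    (hψ : ∀ i ∈ Finset.Icc 1 n, ∀ t : ℝ, ψ i t = (p i - q i) * Real.exp (-(μ i) * t) + q i)
    -- controller (recursive definition, `υ 0 = y_d`)
    (hvbar : ∀ i ∈ Finset.Icc 1 n, 0 < vbar i)
    (hc : ∀ i ∈ Finset.Icc 1 n, 0 < c i)
    (hυ0 : ∀ t : ℝ, υ 0 t = yd t)
    (hz : ∀ i ∈ Finset.Icc 1 n, ∀ t : ℝ, z i t = ξ i t - υ (i - 1) t)
    (hθ : ∀ i ∈ Finset.Icc 1 n, ∀ t : ℝ, θ i t = z i t / ψ i t)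
    (hυ : ∀ i ∈ Finset.Icc 1 n, ∀ t : ℝ,
      υ i t = -(2 * vbar i / π) * Real.arctan (π / (2 * c i) * Real.tan (π / 2 * θ i t)))
    -- state dynamics: `ξ` is continuously differentiable and satisfies the ODE
    (hξ : ∀ i ∈ Finset.Icc 1 n, ∀ t : ℝ, 0 ≤ t → HasDerivAt (ξ i) (ξ' i t) t)
    (hdyn : ∀ i ∈ Finset.Icc 1 (n - 1), ∀ t : ℝ, 0 ≤ t →
      ξ' i t = f i (xibar ξ i t) + g i (xibar ξ i t) * ξ (i + 1) t + d i t)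
    (hdynn : ∀ t : ℝ, 0 ≤ t →
      ξ' n t = f n (xibar ξ n t) + g n (xibar ξ n t) * υ n t + d n t)
    -- feasibility constants `φ i` and `r i` (with `r 0 = r₀`)
    (hr0 : r 0 = r₀)
    (hφ : ∀ i ∈ Finset.Icc 1 (n - 1),
      φ i = k i * ‖deltaVec p vbar i‖ + dbar i + ghi i * p (i + 1) + ghi i * vbar i + r (i - 1))
    (hφn : φ n = k n * ‖deltaVec p vbar n‖ + dbar n + ghi n * vbar n + r (n - 1))
    (hr : ∀ i ∈ Finset.Icc 1 n,
      r i = (φ i / q i + μ i * (p i - q i) / p i) *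
        max (π * vbar i / (2 * c i)) (2 * vbar i * c i / π))
    -- hypothesis: `θ_i(t) ∈ (−1, 1)` on `[0, t*)`
    (tstar : ℝ)
    (hθmem : ∀ t ∈ Ico (0 : ℝ) tstar, ∀ i ∈ Finset.Icc 1 n, θ i t ∈ Ioo (-1 : ℝ) 1) :
    ∀ t ∈ Ico (0 : ℝ) tstar, ∀ i ∈ Finset.Icc 1 n, |deriv (υ i) t| ≤ r i := by
  intro t ht
  have ht₀ : 0 ≤ t := ht.1
  have hψ_eq : ∀ i ∈ Finset.Icc 1 n, ψ i = performance (p i) (q i) (μ i) :=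
    fun i hi => funext (hψ i hi)
  have hθ_lt : ∀ i ∈ Finset.Icc 1 n, |z i t / performance (p i) (q i) (μ i) t| < 1 := by
    intro i hi
    rw [← hψ_eq i hi, ← hθ i hi]
    exact abs_lt.2 (hθmem t ht i hi)
  have hυ_le : ∀ i ≤ n, |υ i t| ≤ vbar i := by
    rintro (_ | i) hi
    · rw [hυ0]; exact hydbd t ht₀
    · rw [hυ _ (by grind) t]; exact abs_controlLaw_le (hvbar _ (by grind)).le
  have hξ_le : ∀ i ∈ Finset.Icc 1 n, |ξ i t| ≤ p i + vbar (i - 1) := by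
    intro i hi
    rw [← sub_add_cancel (ξ i t) (υ (i - 1) t), ← hz i hi t]
    exact (abs_add_le _ _).trans (add_le_add (abs_le_of_abs_div_performance_lt_one (hq i hi)
      (hpq i hi) (hμ i hi).le ht₀ (hθ_lt i hi)) (hυ_le _ (by grind)))
  have hξ'_le : ∀ i ∈ Finset.Icc 1 n, |ξ' i t| + r (i - 1) ≤ φ i := by
    intro i hi
    have hf_le := (hf i hi _).trans <| mul_le_mul_of_nonneg_left
      (norm_xibar_le_norm_deltaVec fun j hj => hξ_le j (by grind)) (hk i hi)
    obtain ⟨hg_lo, hg_hi⟩ := hg i hi (xibar ξ i t)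
    have hg₀ := (hglo i hi).trans hg_lo
    rcases (Finset.mem_Icc.1 hi).2.lt_or_eq with hlt | rfl
    · have := abs_add_mul_add_le hf_le hg₀ hg_hi (hξ_le (i + 1) (by grind)) (hd i hi t ht₀)
      rw [Nat.add_sub_cancel] at this
      rw [hdyn i (by grind) t ht₀, hφ i (by grind)]
      linarith [mul_add (ghi i) (p (i + 1)) (vbar i)]
    · have := abs_add_mul_add_le hf_le hg₀ hg_hi (hυ_le i le_rfl) (hd i hi t ht₀)
      rw [hdynn t ht₀, hφn]
      linarith
  intro i hi
  obtain ⟨v, hv, hv_le⟩ := exists_hasDerivAt_controlLaw_recursion ht₀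
    ⟨yd' t, funext hυ0 ▸ hyd t ht₀, hr0 ▸ hyd'bd t ht₀⟩ (fun i hi => hξ i hi t ht₀) hξ'_le
    (fun i hi => funext (hz i hi))
    (fun i hi => funext fun s => by rw [hυ i hi s, hθ i hi s, hψ_eq i hi]; rfl)
    hθ_lt hr (fun i hi => (hvbar i hi).le) hc hq hpq (fun i hi => (hμ i hi).le) i
    (Finset.mem_Icc.1 hi).2
  rwa [hv.deriv]

/-- For the closed-loop system (pure-feedback system of order `n ≥ 1`
with Lipschitz-bounded unknown drifts `f i`, bounded control coefficients `g i`,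
bounded disturbances `d i`, performance functions `ψ i`, and the recursively
defined backstepping errors `z i`, normalized errors `θ i` and arctan-tan
controller inputs `υ i`, where `υ 0 = y_d`, together with the mutually recursive
feasibility constants `φ i` and `r i` where `r 0 = r₀`): if `t* > 0`, the
feasibility conditions `φ_i < (ḡ_i + g̲_i)·v̄_i + μ_i·(q_i − p_i)` hold for every
`i ∈ {1,…,n}`, and `θ_i(t) ∈ (−1, 1)` for all `t ∈ [0, t*)` and all
`i ∈ {1,…,n}`, then `|υ̇_i(t)| ≤ r_i` for all `t ∈ [0, t*)` and `i ∈ {1,…,n}`. -/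
theorem virtual_input_derivative_bounds
    (n : ℕ) (hn : 1 ≤ n)
    (k glo ghi dbar p q μ vbar c : ℕ → ℝ)
    (f g : (i : ℕ) → EuclideanSpace ℝ (Fin i) → ℝ)
    (d : ℕ → ℝ → ℝ)
    (yd yd' : ℝ → ℝ) (r₀ : ℝ)
    (ξ ξ' υ z θ ψ : ℕ → ℝ → ℝ)
    (φ r : ℕ → ℝ)
    -- assumptions on the unknown system maps
    (hk : ∀ i ∈ Finset.Icc 1 n, 0 ≤ k i)
    (hf : ∀ i ∈ Finset.Icc 1 n, ∀ x : EuclideanSpace ℝ (Fin i), |f i x| ≤ k i * ‖x‖)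
    (hglo : ∀ i ∈ Finset.Icc 1 n, 0 ≤ glo i)
    (hgord : ∀ i ∈ Finset.Icc 1 n, glo i ≤ ghi i)
    (hg : ∀ i ∈ Finset.Icc 1 n, ∀ x : EuclideanSpace ℝ (Fin i),
      glo i ≤ g i x ∧ g i x ≤ ghi i)
    (hdbar : ∀ i ∈ Finset.Icc 1 n, 0 ≤ dbar i)
    (hd : ∀ i ∈ Finset.Icc 1 n, ∀ t : ℝ, 0 ≤ t → |d i t| ≤ dbar i)
    -- the desired output is continuously differentiable and bounded
    (hvbar0 : 0 < vbar 0) (hr₀ : 0 < r₀)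
    (hyd : ∀ t : ℝ, 0 ≤ t → HasDerivAt yd (yd' t) t)
    (hyd'cont : ContinuousOn yd' (Ici 0))
    (hydbd : ∀ t : ℝ, 0 ≤ t → |yd t| ≤ vbar 0)
    (hyd'bd : ∀ t : ℝ, 0 ≤ t → |yd' t| ≤ r₀)
    -- performance functions
    (hq : ∀ i ∈ Finset.Icc 1 n, 0 < q i)
    (hpq : ∀ i ∈ Finset.Icc 1 n, q i ≤ p i)
    (hμ : ∀ i ∈ Finset.Icc 1 n, 0 < μ i)
    (hψ : ∀ i ∈ Finset.Icc 1 n, ∀ t : ℝ, ψ i t = (p i - q i) * Real.exp (-(μ i) * t) + q i)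
    -- controller (recursive definition, `υ 0 = y_d`)
    (hvbar : ∀ i ∈ Finset.Icc 1 n, 0 < vbar i)
    (hc : ∀ i ∈ Finset.Icc 1 n, 0 < c i)
    (hυ0 : ∀ t : ℝ, υ 0 t = yd t)
    (hz : ∀ i ∈ Finset.Icc 1 n, ∀ t : ℝ, z i t = ξ i t - υ (i - 1) t)
    (hθ : ∀ i ∈ Finset.Icc 1 n, ∀ t : ℝ, θ i t = z i t / ψ i t)
    (hυ : ∀ i ∈ Finset.Icc 1 n, ∀ t : ℝ,
      υ i t = -(2 * vbar i / π) * Real.arctan (π / (2 * c i) * Real.tan (π / 2 * θ i t)))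
    -- state dynamics: `ξ` is continuously differentiable and satisfies the ODE
    (hξ : ∀ i ∈ Finset.Icc 1 n, ∀ t : ℝ, 0 ≤ t → HasDerivAt (ξ i) (ξ' i t) t)
    (hξ'cont : ∀ i ∈ Finset.Icc 1 n, ContinuousOn (ξ' i) (Ici 0))
    (hdyn : ∀ i ∈ Finset.Icc 1 (n - 1), ∀ t : ℝ, 0 ≤ t →
      ξ' i t = f i (xibar ξ i t) + g i (xibar ξ i t) * ξ (i + 1) t + d i t)
    (hdynn : ∀ t : ℝ, 0 ≤ t →
      ξ' n t = f n (xibar ξ n t) + g n (xibar ξ n t) * υ n t + d n t)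
    -- feasibility constants `φ i` and `r i` (with `r 0 = r₀`)
    (hr0 : r 0 = r₀)
    (hφ : ∀ i ∈ Finset.Icc 1 (n - 1),
      φ i = k i * ‖deltaVec p vbar i‖ + dbar i + ghi i * p (i + 1) + ghi i * vbar i + r (i - 1))
    (hφn : φ n = k n * ‖deltaVec p vbar n‖ + dbar n + ghi n * vbar n + r (n - 1))
    (hr : ∀ i ∈ Finset.Icc 1 n,
      r i = (φ i / q i + μ i * (p i - q i) / p i) *
        max (π * vbar i / (2 * c i)) (2 * vbar i * c i / π))
    -- feasibility conditions
    (hfeas : ∀ i ∈ Finset.Icc 1 n, φ i < (ghi i + glo i) * vbar i + μ i * (q i - p i))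
    -- hypothesis: `θ_i(t) ∈ (−1, 1)` on `[0, t*)`
    (tstar : ℝ) (htstar : 0 < tstar)
    (hθmem : ∀ t ∈ Ico (0 : ℝ) tstar, ∀ i ∈ Finset.Icc 1 n, θ i t ∈ Ioo (-1 : ℝ) 1) :
    ∀ t ∈ Ico (0 : ℝ) tstar, ∀ i ∈ Finset.Icc 1 n, |deriv (υ i) t| ≤ r i :=
  virtual_input_derivative_bounds_general n k glo ghi dbar p q μ vbar c f g d yd yd' r₀ ξ ξ' υ z θ ψ
    φ r hk hf hglo hg hd hyd hydbd hyd'bd hq hpq hμ hψ hvbar hc hυ0 hz hθ hυ hξ hdyn hdynn hr0 hφ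
    hφn hr tstar hθmem
end
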